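/- Let X be a Banach sequence space over a countably infinite index set I in which the canonical unit vectors (e_i)_{i∈I} form an OP-basis, let integers 1 ≤ r₁ < r₂ < ⋯ < r_N (N ≥ 2) be given, and for each 1 ≤ l ≤ N let T_l = T_{b^{(l)},φ_l} : X → X be a weighted pseudo-shift with weight sequence b^{(l)} = (b_i^{(l)})_{i∈I} of nonzero scalars and injective map φ_l : I → I. Assume that for each 1 ≤ l ≤ N the sequence (φ_l^n)_n is run-away, and that for all 1 ≤ s < l ≤ N the sequence ((φ_s^{r_s})^n)_n is run-away with ((φ_l^{r_l})^n)_n. Then the following are equivalent: (1) T₁^{r₁}, T₂^{r₂}, …, T_N^{r_N} have a dense set of d-supercyclic vectors; (2) there exists a strictly increasing sequence (n_k)_{k≥1} of positive integers such that: (H1) for all i, j ∈ I and all 1 ≤ l, s ≤ N, ‖(∏_{v=0}^{r_l n_k−1} b^{(l)}_{φ_l^v(i)})^{−1} e_{φ_l^{r_l n_k}(i)}‖ · ‖(∏_{v=1}^{r_s n_k} b^{(s)}_{ψ_s^v(j)}) e_{ψ_s^{r_s n_k}(j)}‖ → 0 as k → ∞; and (H2) for every i ∈ I and all 1 ≤ s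 < l ≤ N, ‖(∏_{v=0}^{r_s n_k−1} b^{(s)}_{φ_s^v(i)})^{−1} (∏_{v=1}^{r_l n_k} b^{(l)}_{ψ_l^v(φ_s^{r_s n_k}(i))}) e_{ψ_l^{r_l n_k}(φ_s^{r_s n_k}(i))}‖ → 0 and ‖(∏_{v=0}^{r_l n_k−1} b^{(l)}_{φ_l^v(i)})^{−1} (∏_{v=1}^{r_s n_k} b^{(s)}_{ψ_s^v(φ_l^{r_l n_k}(i))}) e_{ψ_s^{r_s n_k}(φ_l^{r_l n_k}(i))}‖ → 0 as k → ∞. -/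

import Mathlib

open Filter Topology
open scoped Classical

/-- The vector `(∏_{v=1}^{n} b_{ψ^v(i)}) • e_{ψ^n(i)}`, where `ψ` is the partial inverse of the
injective map `φ`, with the convention that the whole term is `0` when `ψ^n(i)` is undefined
(i.e. when `i ∉ φ^n(I)`). -/
noncomputable def backVec {I X : Type*} [AddCommGroup X] [Module ℂ X]
    (φ : I → I) (b : I → ℂ) (e : I → X) (n : ℕ) (i : I) : X :=
  if h : ∃ j, φ^[n] j = i then
    (∏ v ∈ Finset.range n, b (φ^[v] (Classical.choose h))) • e (Classical.choose h)
  else 0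

/-- `(φ^n)_n` is a run-away sequence: for every finite subset `I₀` there is `n₀` such that
`φ^n(I₀) ∩ I₀ = ∅` for all `n ≥ n₀`. -/
def RunAway {I : Type*} (φ : I → I) : Prop :=
  ∀ I₀ : Finset I, ∃ n₀ : ℕ, ∀ n ≥ n₀, ∀ i ∈ I₀, φ^[n] i ∉ I₀

/-- `(φ₁^n)_n` is run-away with `(φ₂^n)_n`: for every finite subset `I₀` there is `n₀` such that
`φ₁^n(I₀) ∩ φ₂^n(I₀) = ∅` for all `n ≥ n₀`. -/
def RunAwayWith {I : Type*} (φ₁ φ₂ : I → I) : Prop :=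
  ∀ I₀ : Finset I, ∃ n₀ : ℕ, ∀ n ≥ n₀, ∀ i ∈ I₀, ∀ j ∈ I₀, φ₁^[n] i ≠ φ₂^[n] j

section aux
variable {X : Type*} [NormedAddCommGroup X] [NormedSpace ℂ X]
variable {I : Type*}

lemma coord_pow (J : X →L[ℂ] (I → ℂ)) (b : I → ℂ) (φ : I → I) (T : X →L[ℂ] X)
    (hT : ∀ x i, J (T x) i = b i * J x (φ i)) :
    ∀ (m : ℕ) (x : X) (i : I),
      J ((T ^ m) x) i = (∏ v ∈ Finset.range m, b (φ^[v] i)) * J x (φ^[m] i) := by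
  intro m
  induction m with
  | zero => intro x i; simp
  | succ m ih =>
    intro x i
    rw [pow_succ, ContinuousLinearMap.mul_apply, ih, hT, Finset.prod_range_succ,
      Function.iterate_succ_apply', mul_assoc]
end aux

section aux2
variable {X : Type*} [NormedAddCommGroup X] [NormedSpace ℂ X]
variable {I : Type*}

lemma backVec_apply_iterate {φ : I → I} (hφ : Function.Injective φ) (b : I → ℂ) (e : I → X)
    (m : ℕ) (j₀ : I) :
    backVec φ b e m (φ^[m] j₀) = (∏ v ∈ Finset.range m, b (φ^[v] j₀)) • e j₀ := by
  have h : ∃ j, φ^[m] j = φ^[m] j₀ := ⟨j₀, rfl⟩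
  have hc : Classical.choose h = j₀ := hφ.iterate m (Classical.choose_spec h)
  rw [backVec, dif_pos h, hc]

lemma backVec_of_not {φ : I → I} (b : I → ℂ) (e : I → X) {m : ℕ} {i : I}
    (h : ¬ ∃ j, φ^[m] j = i) : backVec φ b e m i = 0 := dif_neg h

lemma pow_apply_e (J : X →L[ℂ] (I → ℂ)) (hJ : Function.Injective J)
    (e : I → X) (he : ∀ i j : I, J (e i) j = if j = i then 1 else 0)
    (b : I → ℂ) {φ : I → I} (hφ : Function.Injective φ) (T : X →L[ℂ] X)
    (hT : ∀ x i, J (T x) i = b i * J x (φ i)) (m : ℕ) (i : I) :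
    (T ^ m) (e i) = backVec φ b e m i := by
  apply hJ
  funext k
  rw [coord_pow J b φ T hT, he]
  by_cases h : ∃ j, φ^[m] j = i
  · obtain ⟨j₀, rfl⟩ := h
    rw [backVec_apply_iterate hφ]
    have : J ((∏ v ∈ Finset.range m, b (φ^[v] j₀)) • e j₀) k
        = (∏ v ∈ Finset.range m, b (φ^[v] j₀)) * J (e j₀) k := by
      rw [map_smul]; rfl
    rw [this, he]
    by_cases hk : k = j₀
    · subst hk; simp
    · have : ¬ (φ^[m] k = φ^[m] j₀) := fun hc => hk (hφ.iterate m hc)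
      simp [hk, this]
  · rw [backVec_of_not b e h]
    have : ¬ (φ^[m] k = i) := fun hc => h ⟨k, hc⟩
    simp [this]

lemma pow_apply_S (J : X →L[ℂ] (I → ℂ)) (hJ : Function.Injective J)
    (e : I → X) (he : ∀ i j : I, J (e i) j = if j = i then 1 else 0)
    {b : I → ℂ} (hb : ∀ i, b i ≠ 0) {φ : I → I} (hφ : Function.Injective φ) (T : X →L[ℂ] X)
    (hT : ∀ x i, J (T x) i = b i * J x (φ i)) (m : ℕ) (i : I) :
    (T ^ m) ((∏ v ∈ Finset.range m, b (φ^[v] i))⁻¹ • e (φ^[m] i)) = e i := by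
  rw [map_smul, pow_apply_e J hJ e he b hφ T hT, backVec_apply_iterate hφ, smul_smul,
    inv_mul_cancel₀ (Finset.prod_ne_zero_iff.2 fun v _ => hb _), one_smul]
end aux2

section main
variable {X : Type*} [NormedAddCommGroup X] [NormedSpace ℂ X] [CompleteSpace X]
  {I : Type*} {N : ℕ}

lemma exists_large_n (hinfdim : ¬ FiniteDimensional ℂ X) (hN : 2 ≤ N)
    (x : X) (v : ℕ → Fin N → X) (y : Fin N → X) {δ : ℝ} (hδ : 0 < δ) (M' : ℕ)
    (hd : Dense (Set.range fun p : ℂ × ℕ => fun l : Fin N => p.1 • v p.2 l)) :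
    ∃ (lam : ℂ) (n : ℕ), M' ≤ n ∧ dist (fun l => lam • v n l) y < δ := by
  classical
  set W : Submodule ℂ (Fin N → X) := Submodule.span ℂ (v '' Set.Iio M') with hW
  have hfd : FiniteDimensional ℂ W :=
    FiniteDimensional.span_of_finite ℂ ((Set.finite_Iio M').image v)
  have hWc : IsClosed (W : Set (Fin N → X)) := Submodule.closed_of_finiteDimensional W
  have hWne : ¬ (Metric.ball y δ ⊆ (W : Set (Fin N → X))) := by
    intro hsub
    have hint : (interior (W : Set (Fin N → X))).Nonempty :=
      ⟨y, interior_maximal hsub Metric.isOpen_ball (Metric.mem_ball_self hδ)⟩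
    have htop : W = ⊤ := Submodule.eq_top_of_nonempty_interior' W hint
    have : FiniteDimensional ℂ (Fin N → X) := by
      rw [htop] at hfd
      exact Module.Finite.equiv (Submodule.topEquiv)
    have : FiniteDimensional ℂ X := by
      have l0 : Fin N := ⟨0, by omega⟩
      exact Module.Finite.of_surjective (LinearMap.proj (R := ℂ) (φ := fun _ : Fin N => X) l0)
        (fun z => ⟨fun _ => z, rfl⟩)
    exact hinfdim this
  obtain ⟨p, hpb, hpW⟩ : ∃ p, p ∈ Metric.ball y δ ∧ p ∉ (W : Set (Fin N → X)) := by
    by_contra h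
    push_neg at h
    exact hWne fun p hp => h p hp
  obtain ⟨q, ⟨⟨lam, n⟩, hq⟩, hqU⟩ := hd.exists_mem_open (Metric.isOpen_ball.sdiff hWc)
    ⟨p, hpb, hpW⟩
  refine ⟨lam, n, ?_, ?_⟩
  · by_contra hn
    push_neg at hn
    apply hqU.2
    have hv : v n ∈ W := Submodule.subset_span ⟨n, hn, rfl⟩
    have : (fun l => lam • v n l) ∈ W := by
      simpa [Pi.smul_def] using W.smul_mem lam hv
    simp only [← hq]
    exact this
  · have := hqU.1
    simp only [← hq] at this
    exact this

set_option maxHeartbeats 2000000 in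
lemma core_forward
    [Infinite I]
    (hinfdim : ¬ FiniteDimensional ℂ X)
    (J : X →L[ℂ] (I → ℂ)) (hJ : Function.Injective J)
    (e : I → X) (he : ∀ i j : I, J (e i) j = if j = i then 1 else 0)
    (f : I → X →L[ℂ] ℂ) (hf : ∀ (i : I) (x : X), f i x = J x i)
    {C : ℝ} (hC : ∀ i, ‖e i‖ * ‖f i‖ ≤ C)
    (hN : 2 ≤ N)
    (r : Fin N → ℕ) (hr1 : ∀ l, 1 ≤ r l)
    (b : Fin N → I → ℂ) (hb : ∀ l i, b l i ≠ 0)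
    (φ : Fin N → I → I) (hφ : ∀ l, Function.Injective (φ l))
    (T : Fin N → X →L[ℂ] X)
    (hT : ∀ (l : Fin N) (x : X) (i : I), J (T l x) i = b l i * J x (φ l i))
    (hrun1 : ∀ l : Fin N, RunAway (φ l))
    (hrun2 : ∀ s l : Fin N, s < l → RunAwayWith ((φ s)^[r s]) ((φ l)^[r l]))
    (hx : Dense {x : X | Dense (Set.range fun p : ℂ × ℕ =>
        fun l : Fin N => p.1 • (((T l) ^ (r l * p.2)) x))})
    (I₀ : Finset I) {ε : ℝ} (hε : 0 < ε) (M : ℕ) :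
    ∃ n, M ≤ n ∧
      (∀ i ∈ I₀, ∀ j ∈ I₀, ∀ l s : Fin N,
        ‖(∏ v ∈ Finset.range (r l * n), b l ((φ l)^[v] i))⁻¹ • e ((φ l)^[r l * n] i)‖ *
          ‖backVec (φ s) (b s) e (r s * n) j‖ < ε) ∧
      (∀ i ∈ I₀, ∀ s l : Fin N, s ≠ l →
        ‖(∏ v ∈ Finset.range (r s * n), b s ((φ s)^[v] i))⁻¹ •
          backVec (φ l) (b l) e (r l * n) ((φ s)^[r s * n] i)‖ < ε) := by
  classical
  -- trivial case: I₀ empty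
  rcases I₀.eq_empty_or_nonempty with hI0 | hI0
  · exact ⟨M, le_refl M, by simp [hI0], by simp [hI0]⟩
  -- constants
  have hC1 : (1:ℝ) ≤ C := by
    obtain ⟨i₀⟩ : Nonempty I := inferInstance
    have h1 : ‖f i₀ (e i₀)‖ ≤ ‖f i₀‖ * ‖e i₀‖ := (f i₀).le_opNorm (e i₀)
    have h2 : f i₀ (e i₀) = 1 := by rw [hf]; simpa using he i₀ i₀
    rw [h2] at h1
    simp only [norm_one] at h1
    calc (1:ℝ) ≤ ‖f i₀‖ * ‖e i₀‖ := h1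
      _ = ‖e i₀‖ * ‖f i₀‖ := mul_comm _ _
      _ ≤ C := hC i₀
  have hC0 : (0:ℝ) < C := lt_of_lt_of_le one_pos hC1
  set E : ℝ := 1 + ∑ j ∈ I₀, ‖e j‖ with hE
  have hE1 : (1:ℝ) ≤ E := by
    have : (0:ℝ) ≤ ∑ j ∈ I₀, ‖e j‖ := Finset.sum_nonneg fun _ _ => norm_nonneg _
    linarith
  have hEj : ∀ j ∈ I₀, ‖e j‖ ≤ E := fun j hj => by
    have := Finset.single_le_sum (f := fun j => ‖e j‖) (fun _ _ => norm_nonneg _) hj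
    linarith
  set Nf : ℝ := ∑ j ∈ I₀, ‖f j‖ with hNf
  have hNf0 : (0:ℝ) ≤ Nf := Finset.sum_nonneg fun _ _ => norm_nonneg _
  have hNfj : ∀ j ∈ I₀, ‖f j‖ ≤ Nf := fun j hj =>
    Finset.single_le_sum (f := fun j => ‖f j‖) (fun _ _ => norm_nonneg _) hj
  set δ : ℝ := min (1/(2*(Nf+1))) (min 1 (ε / (1 + 4*C*(E+C) + 2*C))) with hδdef
  have hδ : 0 < δ := by
    apply lt_min
    · positivity
    · apply lt_min one_pos; positivity
  have hδ1 : δ ≤ 1 := le_trans (min_le_right _ _) (min_le_left _ _)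
  have hδNf : δ * Nf ≤ 1/2 := by
    have h1 : δ ≤ 1/(2*(Nf+1)) := min_le_left _ _
    have h2 : δ * Nf ≤ (1/(2*(Nf+1))) * Nf := mul_le_mul_of_nonneg_right h1 hNf0
    have h3 : (1/(2*(Nf+1))) * Nf ≤ 1/2 := by
      rw [div_mul_eq_mul_div, div_le_div_iff₀ (by positivity) (by positivity)]
      nlinarith
    linarith
  have hδε : δ ≤ ε / (1 + 4*C*(E+C) + 2*C) := le_trans (min_le_right _ _) (min_le_right _ _)
  have hden : (0:ℝ) < 1 + 4*C*(E+C) + 2*C := by nlinarith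
  have hδD : δ * (1 + 4*C*(E+C) + 2*C) ≤ ε := (le_div_iff₀ hden).mp hδε
  have haux1 : (0:ℝ) < 1 + 4*C*(E+C) := by nlinarith
  have h2Cδ : 2*C*δ < ε := by nlinarith [mul_pos hδ haux1]
  have h4Cδ : 4*C*δ*(E+C*δ) < ε := by
    have hcd : C*δ ≤ C := by nlinarith
    have h1 : 4*C*δ*(E+C*δ) ≤ 4*C*(E+C)*δ := by nlinarith [mul_pos hC0 hδ]
    have h2 : (0:ℝ) < 1 + 2*C := by nlinarith
    nlinarith [mul_pos hδ h2]
  -- run-away bounds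
  choose n1 hn1 using fun l => hrun1 l I₀
  have hrw : ∀ s l : Fin N, ∃ n₀, ∀ n ≥ n₀, s < l →
      ∀ i ∈ I₀, ∀ j ∈ I₀, ((φ s)^[r s])^[n] i ≠ ((φ l)^[r l])^[n] j := by
    intro s l
    by_cases h : s < l
    · obtain ⟨n₀, hn₀⟩ := hrun2 s l h I₀
      exact ⟨n₀, fun n hn _ => hn₀ n hn⟩
    · exact ⟨0, fun n _ hc => absurd hc h⟩
  choose n2 hn2 using hrw
  set M' : ℕ := M + 1 + Finset.univ.sup n1 +
    Finset.univ.sup (fun s => Finset.univ.sup (n2 s)) with hM'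
  have hM'M : M ≤ M' := by omega
  have hM'n1 : ∀ l, n1 l ≤ M' := fun l => by
    have := Finset.le_sup (f := n1) (Finset.mem_univ l); omega
  have hM'n2 : ∀ s l : Fin N, n2 s l ≤ M' := fun s l => by
    have h1 := Finset.le_sup (f := n2 s) (Finset.mem_univ l)
    have h2 := Finset.le_sup (f := fun s => Finset.univ.sup (n2 s)) (Finset.mem_univ s)
    omega
  -- the target vector
  set y : X := ∑ j ∈ I₀, e j with hy
  have hJy : ∀ i, J y i = if i ∈ I₀ then 1 else 0 := by
    intro i
    have : J y = ∑ j ∈ I₀, J (e j) := by rw [hy, map_sum]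
    rw [this]
    rw [Finset.sum_apply]
    simp only [he]
    rw [Finset.sum_ite_eq I₀ i (fun _ => (1:ℂ))]
  -- pick a d-supercyclic vector near y
  obtain ⟨x, hxb, hxd⟩ : ∃ x, dist x y < δ ∧ x ∈ {x : X | Dense (Set.range fun p : ℂ × ℕ =>
      fun l : Fin N => p.1 • (((T l) ^ (r l * p.2)) x))} := by
    have := Metric.dense_iff.mp hx y δ hδ
    obtain ⟨x, hx1, hx2⟩ := this
    exact ⟨x, Metric.mem_ball.mp hx1, hx2⟩
  -- pick an orbit element close to the constant tuple y with large n
  obtain ⟨lam, n, hnM', hdist⟩ := exists_large_n hinfdim hN x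
    (fun n l => ((T l) ^ (r l * n)) x) (fun _ => y) hδ M' hxd
  have hnM : M ≤ n := le_trans hM'M hnM'
  have hql : ∀ l : Fin N, ‖lam • ((T l ^ (r l * n)) x) - y‖ < δ := by
    intro l
    have := (dist_pi_lt_iff hδ).mp hdist l
    rwa [dist_eq_norm] at this
  have hxyn : ‖x - y‖ < δ := by rwa [dist_eq_norm] at hxb
  have hcoord : ∀ (w : X) (i : I), ‖J w i - J y i‖ ≤ ‖f i‖ * ‖w - y‖ := by
    intro w i
    have h1 : f i (w - y) = J w i - J y i := by rw [hf, map_sub]; rfl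
    calc ‖J w i - J y i‖ = ‖f i (w - y)‖ := by rw [h1]
      _ ≤ ‖f i‖ * ‖w - y‖ := (f i).le_opNorm _
  have hkeyJ : ∀ (w : X) (i : I), ‖e i‖ * ‖J w i - J y i‖ ≤ C * ‖w - y‖ := by
    intro w i
    calc ‖e i‖ * ‖J w i - J y i‖ ≤ ‖e i‖ * (‖f i‖ * ‖w - y‖) :=
          mul_le_mul_of_nonneg_left (hcoord w i) (norm_nonneg _)
      _ = ‖e i‖ * ‖f i‖ * ‖w - y‖ := by ring
      _ ≤ C * ‖w - y‖ := mul_le_mul_of_nonneg_right (hC i) (norm_nonneg _)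
  have horb : ∀ (l : Fin N) (k : I), J (lam • ((T l ^ (r l * n)) x)) k
      = lam * ((∏ v ∈ Finset.range (r l * n), b l ((φ l)^[v] k)) * J x ((φ l)^[r l * n] k)) := by
    intro l k
    rw [map_smul, Pi.smul_apply, smul_eq_mul, coord_pow J (b l) (φ l) (T l) (hT l)]
  have hnrl : ∀ l : Fin N, n ≤ r l * n := fun l => Nat.le_mul_of_pos_left n (hr1 l)
  -- KA : lower bound on the full coordinate of the orbit point
  have hKA : ∀ (l : Fin N), ∀ i ∈ I₀, 1/2 ≤
      ‖lam‖ * (‖∏ v ∈ Finset.range (r l * n), b l ((φ l)^[v] i)‖ * ‖J x ((φ l)^[r l * n] i)‖) := by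
    intro l i hi
    have h1 : ‖J (lam • ((T l ^ (r l * n)) x)) i - J y i‖ ≤ ‖f i‖ * δ := by
      calc ‖J (lam • ((T l ^ (r l * n)) x)) i - J y i‖
          ≤ ‖f i‖ * ‖lam • ((T l ^ (r l * n)) x) - y‖ := hcoord _ i
        _ ≤ ‖f i‖ * δ := mul_le_mul_of_nonneg_left (le_of_lt (hql l)) (norm_nonneg _)
    rw [horb, hJy, if_pos hi] at h1
    have h2 : ‖f i‖ * δ ≤ 1/2 := by
      have := mul_le_mul_of_nonneg_right (hNfj i hi) (le_of_lt hδ)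
      nlinarith
    have h3 : (1:ℝ) - ‖lam * ((∏ v ∈ Finset.range (r l * n), b l ((φ l)^[v] i))
        * J x ((φ l)^[r l * n] i))‖ ≤ ‖lam * ((∏ v ∈ Finset.range (r l * n), b l ((φ l)^[v] i))
        * J x ((φ l)^[r l * n] i)) - 1‖ := by
      have h4 := norm_sub_norm_le (1:ℂ) (lam * ((∏ v ∈ Finset.range (r l * n), b l ((φ l)^[v] i))
        * J x ((φ l)^[r l * n] i)))
      rw [norm_one, norm_sub_rev] at h4
      exact h4
    rw [norm_mul, norm_mul] at h3
    linarith
  -- KB : smallness of the far coordinate of x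
  have hKB : ∀ (l : Fin N), ∀ i ∈ I₀,
      ‖e ((φ l)^[r l * n] i)‖ * ‖J x ((φ l)^[r l * n] i)‖ ≤ C * δ := by
    intro l i hi
    have hout : (φ l)^[r l * n] i ∉ I₀ :=
      hn1 l (r l * n) (le_trans (le_trans (hM'n1 l) hnM') (hnrl l)) i hi
    have h1 := hkeyJ x ((φ l)^[r l * n] i)
    rw [hJy, if_neg hout, sub_zero] at h1
    calc ‖e ((φ l)^[r l * n] i)‖ * ‖J x ((φ l)^[r l * n] i)‖ ≤ C * ‖x - y‖ := h1
      _ ≤ C * δ := mul_le_mul_of_nonneg_left (le_of_lt hxyn) (le_of_lt hC0)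
  -- (a) bound on the forward vectors
  have hSb : ∀ (l : Fin N), ∀ i ∈ I₀,
      ‖(∏ v ∈ Finset.range (r l * n), b l ((φ l)^[v] i))⁻¹ • e ((φ l)^[r l * n] i)‖
        ≤ 2*C*δ*‖lam‖ := by
    intro l i hi
    have hKAi := hKA l i hi
    have hKBi := hKB l i hi
    have hBpos : 0 < ‖∏ v ∈ Finset.range (r l * n), b l ((φ l)^[v] i)‖ :=
      norm_pos_iff.mpr (Finset.prod_ne_zero_iff.2 fun v _ => hb l _)
    set A := ‖lam‖ with hA
    set B := ‖∏ v ∈ Finset.range (r l * n), b l ((φ l)^[v] i)‖ with hB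
    set Z := ‖J x ((φ l)^[r l * n] i)‖ with hZ
    set Ee := ‖e ((φ l)^[r l * n] i)‖ with hEe
    rw [norm_smul, norm_inv]
    rw [inv_mul_le_iff₀ hBpos]
    nlinarith [mul_le_mul_of_nonneg_left hKBi (by positivity : (0:ℝ) ≤ 2*A*B),
      mul_le_mul_of_nonneg_left hKAi (norm_nonneg (e ((φ l)^[r l * n] i)))]
  -- (b) bound on the backward vectors
  have hTb : ∀ (s : Fin N), ∀ j ∈ I₀,
      ‖lam‖ * ‖backVec (φ s) (b s) e (r s * n) j‖ ≤ 2*(E + C*δ) := by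
    intro s j hj
    by_cases hex : ∃ j₀, (φ s)^[r s * n] j₀ = j
    · obtain ⟨j₀, rfl⟩ := hex
      rw [backVec_apply_iterate (hφ s)]
      have hkey := hkeyJ (lam • ((T s ^ (r s * n)) x)) j₀
      rw [horb] at hkey
      have hkey2 : ‖e j₀‖ * ‖lam * ((∏ v ∈ Finset.range (r s * n), b s ((φ s)^[v] j₀))
          * J x ((φ s)^[r s * n] j₀))‖ ≤ E + C * δ := by
        have htri : ‖lam * ((∏ v ∈ Finset.range (r s * n), b s ((φ s)^[v] j₀))
            * J x ((φ s)^[r s * n] j₀))‖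
            ≤ ‖lam * ((∏ v ∈ Finset.range (r s * n), b s ((φ s)^[v] j₀))
              * J x ((φ s)^[r s * n] j₀)) - J y j₀‖ + ‖J y j₀‖ := by
          have := norm_add_le (lam * ((∏ v ∈ Finset.range (r s * n), b s ((φ s)^[v] j₀))
              * J x ((φ s)^[r s * n] j₀)) - J y j₀) (J y j₀)
          simpa using this
        have hEj₀ : ‖e j₀‖ * ‖J y j₀‖ ≤ E := by
          rw [hJy]
          by_cases hj₀ : j₀ ∈ I₀
          · rw [if_pos hj₀]; simpa using hEj j₀ hj₀
          · rw [if_neg hj₀]; simp; linarith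
        have hsmall : ‖e j₀‖ * ‖lam * ((∏ v ∈ Finset.range (r s * n), b s ((φ s)^[v] j₀))
            * J x ((φ s)^[r s * n] j₀)) - J y j₀‖ ≤ C * δ := by
          calc _ ≤ C * ‖lam • ((T s ^ (r s * n)) x) - y‖ := hkey
            _ ≤ C * δ := mul_le_mul_of_nonneg_left (le_of_lt (hql s)) (le_of_lt hC0)
        nlinarith [norm_nonneg (e j₀), hEj₀, hsmall,
          mul_le_mul_of_nonneg_left htri (norm_nonneg (e j₀))]
      have hξ : 1/2 ≤ ‖J x ((φ s)^[r s * n] j₀)‖ := by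
        have h1 := hcoord x ((φ s)^[r s * n] j₀)
        rw [hJy, if_pos hj] at h1
        have h2 : ‖J x ((φ s)^[r s * n] j₀) - 1‖ ≤ 1/2 := by
          have h3 : ‖f ((φ s)^[r s * n] j₀)‖ * ‖x - y‖ ≤ Nf * δ := by
            apply mul_le_mul (hNfj _ hj) (le_of_lt hxyn) (norm_nonneg _) hNf0
          nlinarith
        have h4 := norm_sub_norm_le (1:ℂ) (J x ((φ s)^[r s * n] j₀))
        rw [norm_one, norm_sub_rev] at h4
        linarith
      rw [norm_mul, norm_mul] at hkey2
      rw [norm_smul]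
      nlinarith [mul_le_mul_of_nonneg_left hξ
        (by positivity : (0:ℝ) ≤ ‖e j₀‖ * (‖lam‖ * ‖∏ v ∈ Finset.range (r s * n), b s ((φ s)^[v] j₀)‖))]
    · rw [backVec_of_not _ _ hex, norm_zero, mul_zero]
      positivity
  -- (c) cross bounds
  have hcross : ∀ i ∈ I₀, ∀ s l : Fin N, s ≠ l →
      ‖(∏ v ∈ Finset.range (r s * n), b s ((φ s)^[v] i))⁻¹ •
        backVec (φ l) (b l) e (r l * n) ((φ s)^[r s * n] i)‖ < ε := by
    intro i hi s l hsl
    by_cases hex : ∃ j₀, (φ l)^[r l * n] j₀ = (φ s)^[r s * n] i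
    · obtain ⟨j₀, hj₀⟩ := hex
      have hj₀I : j₀ ∉ I₀ := by
        intro hj₀I
        rcases lt_or_gt_of_ne hsl with h | h
        · apply hn2 s l n (le_trans (hM'n2 s l) hnM') h i hi j₀ hj₀I
          rw [← Function.iterate_mul, ← Function.iterate_mul]
          exact hj₀.symm
        · apply hn2 l s n (le_trans (hM'n2 l s) hnM') h j₀ hj₀I i hi
          rw [← Function.iterate_mul, ← Function.iterate_mul]
          exact hj₀
      rw [← hj₀, backVec_apply_iterate (hφ l)]
      have hKAi := hKA s i hi
      have hkey := hkeyJ (lam • ((T l ^ (r l * n)) x)) j₀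
      rw [horb, hJy, if_neg hj₀I, sub_zero, hj₀] at hkey
      have hkey2 : ‖e j₀‖ * ‖lam * ((∏ v ∈ Finset.range (r l * n), b l ((φ l)^[v] j₀))
          * J x ((φ s)^[r s * n] i))‖ ≤ C * δ := by
        calc _ ≤ C * ‖lam • ((T l ^ (r l * n)) x) - y‖ := hkey
          _ ≤ C * δ := mul_le_mul_of_nonneg_left (le_of_lt (hql l)) (le_of_lt hC0)
      rw [norm_mul, norm_mul] at hkey2
      have hBpos : 0 < ‖∏ v ∈ Finset.range (r s * n), b s ((φ s)^[v] i)‖ :=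
        norm_pos_iff.mpr (Finset.prod_ne_zero_iff.2 fun v _ => hb s _)
      set A := ‖lam‖ with hA
      set Bs := ‖∏ v ∈ Finset.range (r s * n), b s ((φ s)^[v] i)‖ with hBs
      set G := ‖∏ v ∈ Finset.range (r l * n), b l ((φ l)^[v] j₀)‖ with hG
      set Z := ‖J x ((φ s)^[r s * n] i)‖ with hZ
      set Ee := ‖e j₀‖ with hEe
      have hle : Bs⁻¹ * (G * Ee) ≤ 2*C*δ := by
        rw [inv_mul_le_iff₀ hBpos]
        nlinarith [mul_le_mul_of_nonneg_left hkey2 (by positivity : (0:ℝ) ≤ 2*Bs),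
          mul_le_mul_of_nonneg_left hKAi (by positivity : (0:ℝ) ≤ G * Ee)]
      have : ‖(∏ v ∈ Finset.range (r s * n), b s ((φ s)^[v] i))⁻¹ •
          ((∏ v ∈ Finset.range (r l * n), b l ((φ l)^[v] j₀)) • e j₀)‖
          = Bs⁻¹ * (G * Ee) := by
        rw [norm_smul, norm_smul, norm_inv]
      rw [this]
      linarith
    · rw [backVec_of_not _ _ hex, smul_zero, norm_zero]
      exact hε
  refine ⟨n, hnM, ?_, fun i hi s l hsl => hcross i hi s l hsl⟩
  intro i hi j hj l s
  calc ‖(∏ v ∈ Finset.range (r l * n), b l ((φ l)^[v] i))⁻¹ • e ((φ l)^[r l * n] i)‖ *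
        ‖backVec (φ s) (b s) e (r s * n) j‖
      ≤ (2*C*δ*‖lam‖) * ‖backVec (φ s) (b s) e (r s * n) j‖ :=
        mul_le_mul_of_nonneg_right (hSb l i hi) (norm_nonneg _)
    _ = 2*C*δ*(‖lam‖ * ‖backVec (φ s) (b s) e (r s * n) j‖) := by ring
    _ ≤ 2*C*δ*(2*(E + C*δ)) := mul_le_mul_of_nonneg_left (hTb s j hj) (by positivity)
    _ = 4*C*δ*(E + C*δ) := by ring
    _ < ε := h4Cδ

lemma e_ne_zero (J : X →L[ℂ] (I → ℂ)) (e : I → X)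
    (he : ∀ i j : I, J (e i) j = if j = i then 1 else 0) (i : I) : e i ≠ 0 := by
  intro h
  have h1 := he i i
  rw [h] at h1
  simp at h1

set_option maxHeartbeats 2000000 in
lemma core_backward
    (J : X →L[ℂ] (I → ℂ)) (hJ : Function.Injective J)
    (e : I → X) (he : ∀ i j : I, J (e i) j = if j = i then 1 else 0)
    (hN : 2 ≤ N)
    (r : Fin N → ℕ)
    (b : Fin N → I → ℂ) (hb : ∀ l i, b l i ≠ 0)
    (φ : Fin N → I → I) (hφ : ∀ l, Function.Injective (φ l))
    (T : Fin N → X →L[ℂ] X)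
    (hT : ∀ (l : Fin N) (x : X) (i : I), J (T l x) i = b l i * J x (φ l i))
    (n : ℕ → ℕ)
    (hH1 : ∀ i j : I, ∀ l s : Fin N,
      Tendsto (fun k => ‖(∏ v ∈ Finset.range (r l * n k), b l ((φ l)^[v] i))⁻¹ •
            e ((φ l)^[r l * n k] i)‖ *
          ‖backVec (φ s) (b s) e (r s * n k) j‖) atTop (𝓝 0))
    (hH2 : ∀ i : I, ∀ s l : Fin N, s ≠ l →
      Tendsto (fun k => ‖(∏ v ∈ Finset.range (r s * n k), b s ((φ s)^[v] i))⁻¹ •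
          backVec (φ l) (b l) e (r l * n k) ((φ s)^[r s * n k] i)‖) atTop (𝓝 0))
    (F : Finset I) (c : I → ℂ) (d : Fin N → I → ℂ) {ε : ℝ} (hε : 0 < ε) :
    ∃ (z : X) (lam : ℂ) (m : ℕ),
      ‖z - ∑ i ∈ F, c i • e i‖ < ε ∧
      ∀ l : Fin N, ‖lam • ((T l ^ (r l * m)) z) - ∑ i ∈ F, d l i • e i‖ < ε := by
  classical
  rcases F.eq_empty_or_nonempty with hF | hF
  · refine ⟨0, 0, 0, by simp [hF, hε], fun l => by simp [hF, hε]⟩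
  obtain ⟨i₀, hi₀⟩ := hF
  have l₀ : Fin N := ⟨0, by omega⟩
  -- the quantities
  set A : ℕ → ℝ := fun k => ∑ l : Fin N, ∑ i ∈ F,
    ‖(∏ v ∈ Finset.range (r l * n k), b l ((φ l)^[v] i))⁻¹ • e ((φ l)^[r l * n k] i)‖ with hA
  set Bf : ℕ → ℝ := fun k => ∑ s : Fin N, ∑ j ∈ F,
    ‖backVec (φ s) (b s) e (r s * n k) j‖ with hBf
  have hA0 : ∀ k, 0 < A k := by
    intro k
    apply Finset.sum_pos'
    · intro l _
      exact Finset.sum_nonneg fun i _ => norm_nonneg _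
    · refine ⟨l₀, Finset.mem_univ _, Finset.sum_pos' (fun i _ => norm_nonneg _)
        ⟨i₀, hi₀, ?_⟩⟩
      rw [norm_smul]
      have h1 : (∏ v ∈ Finset.range (r l₀ * n k), b l₀ ((φ l₀)^[v] i₀)) ≠ 0 :=
        Finset.prod_ne_zero_iff.2 fun v _ => hb l₀ _
      have h2 : e ((φ l₀)^[r l₀ * n k] i₀) ≠ 0 := e_ne_zero J e he _
      exact mul_pos (norm_pos_iff.mpr (inv_ne_zero h1)) (norm_pos_iff.mpr h2)
  have hB0 : ∀ k, 0 ≤ Bf k := fun k =>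
    Finset.sum_nonneg fun s _ => Finset.sum_nonneg fun j _ => norm_nonneg _
  have hAB : Tendsto (fun k => A k * Bf k) atTop (𝓝 0) := by
    have heq : ∀ k, A k * Bf k = ∑ l : Fin N, ∑ s : Fin N, ∑ i ∈ F, ∑ j ∈ F,
        ‖(∏ v ∈ Finset.range (r l * n k), b l ((φ l)^[v] i))⁻¹ • e ((φ l)^[r l * n k] i)‖ *
          ‖backVec (φ s) (b s) e (r s * n k) j‖ := by
      intro k
      rw [hA, hBf, Finset.sum_mul_sum]
      apply Finset.sum_congr rfl; intro l _
      apply Finset.sum_congr rfl; intro s _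
      rw [Finset.sum_mul_sum]
    simp only [heq]
    have : Tendsto (fun k => ∑ l : Fin N, ∑ s : Fin N, ∑ i ∈ F, ∑ j ∈ F,
        ‖(∏ v ∈ Finset.range (r l * n k), b l ((φ l)^[v] i))⁻¹ • e ((φ l)^[r l * n k] i)‖ *
          ‖backVec (φ s) (b s) e (r s * n k) j‖) atTop
        (𝓝 (∑ _l : Fin N, ∑ _s : Fin N, ∑ _i ∈ F, ∑ _j ∈ F, (0:ℝ))) := by
      apply tendsto_finset_sum; intro l _
      apply tendsto_finset_sum; intro s _
      apply tendsto_finset_sum; intro i _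
      apply tendsto_finset_sum; intro j _
      exact hH1 i j l s
    simpa using this
  -- the scaling factors
  set lamr : ℕ → ℝ := fun k => if Bf k = 0 then ((k:ℝ)+1)*(A k + 1)
    else Real.sqrt (A k / Bf k) with hlamr
  have hlampos : ∀ k, 0 < lamr k := by
    intro k
    simp only [hlamr]
    by_cases h : Bf k = 0
    · rw [if_pos h]
      have := hA0 k
      have h1 : (0:ℝ) < (k:ℝ)+1 := by positivity
      nlinarith
    · rw [if_neg h]
      have hBpos : 0 < Bf k := lt_of_le_of_ne (hB0 k) (Ne.symm h)
      exact Real.sqrt_pos.mpr (div_pos (hA0 k) hBpos)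
  have hlamB : ∀ k, lamr k * Bf k ≤ Real.sqrt (A k * Bf k) := by
    intro k
    simp only [hlamr]
    by_cases h : Bf k = 0
    · rw [if_pos h, h, mul_zero]; positivity
    · rw [if_neg h]
      have hBpos : 0 < Bf k := lt_of_le_of_ne (hB0 k) (Ne.symm h)
      have h2 : A k * Bf k = (A k / Bf k) * Bf k ^ 2 := by field_simp
      rw [h2, Real.sqrt_mul (div_nonneg (hA0 k).le hBpos.le), Real.sqrt_sq hBpos.le]
  have hlamA : ∀ k, (lamr k)⁻¹ * A k ≤ Real.sqrt (A k * Bf k) + 1/((k:ℝ)+1) := by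
    intro k
    simp only [hlamr]
    by_cases h : Bf k = 0
    · rw [if_pos h]
      have hk : (0:ℝ) < (k:ℝ)+1 := by positivity
      have hAk := hA0 k
      have h1 : (((k:ℝ)+1)*(A k + 1))⁻¹ * A k ≤ 1/((k:ℝ)+1) := by
        rw [inv_mul_le_iff₀ (by positivity)]
        have h3 : ((k:ℝ)+1) * (A k + 1) * (1/((k:ℝ)+1)) = A k + 1 := by
          field_simp
        rw [h3]; linarith
      have h2 : (0:ℝ) ≤ Real.sqrt (A k * Bf k) := Real.sqrt_nonneg _
      linarith
    · rw [if_neg h]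
      have hBpos : 0 < Bf k := lt_of_le_of_ne (hB0 k) (Ne.symm h)
      have hAk := hA0 k
      have heq : (Real.sqrt (A k / Bf k))⁻¹ * A k = Real.sqrt (A k * Bf k) := by
        rw [← Real.sqrt_inv, inv_div]
        have h2 : A k * Bf k = (Bf k / A k) * A k ^ 2 := by field_simp
        rw [h2, Real.sqrt_mul (div_nonneg (hB0 k) hAk.le), Real.sqrt_sq hAk.le]
      rw [heq]
      have : (0:ℝ) < 1/((k:ℝ)+1) := by positivity
      linarith
  have hsq : Tendsto (fun k => Real.sqrt (A k * Bf k)) atTop (𝓝 0) := by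
    have := (Real.continuous_sqrt.tendsto 0).comp hAB
    simpa [Function.comp_def] using this
  have htail : Tendsto (fun k => Real.sqrt (A k * Bf k) + 1/((k:ℝ)+1)) atTop (𝓝 0) := by
    have := hsq.add tendsto_one_div_add_atTop_nhds_zero_nat
    simpa using this
  have hlam1 : Tendsto (fun k => (lamr k)⁻¹ * A k) atTop (𝓝 0) :=
    squeeze_zero (fun k => mul_nonneg (inv_nonneg.mpr (hlampos k).le) (hA0 k).le) hlamA htail
  have hlam2 : Tendsto (fun k => lamr k * Bf k) atTop (𝓝 0) :=
    squeeze_zero (fun k => mul_nonneg (hlampos k).le (hB0 k)) hlamB hsq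
  -- coefficient bounds
  set Dc : ℝ := 1 + ∑ i ∈ F, ‖c i‖ with hDcdef
  set Dd : ℝ := 1 + ∑ s : Fin N, ∑ i ∈ F, ‖d s i‖ with hDddef
  have hDc0 : 0 < Dc := by
    have : (0:ℝ) ≤ ∑ i ∈ F, ‖c i‖ := Finset.sum_nonneg fun _ _ => norm_nonneg _
    rw [hDcdef]; linarith
  have hDd0 : 0 < Dd := by
    have : (0:ℝ) ≤ ∑ s : Fin N, ∑ i ∈ F, ‖d s i‖ :=
      Finset.sum_nonneg fun _ _ => Finset.sum_nonneg fun _ _ => norm_nonneg _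
    rw [hDddef]; linarith
  have hcb : ∀ i ∈ F, ‖c i‖ ≤ Dc := by
    intro i hi
    have := Finset.single_le_sum (f := fun i => ‖c i‖) (fun _ _ => norm_nonneg _) hi
    rw [hDcdef]; linarith
  have hdb : ∀ (s : Fin N), ∀ i ∈ F, ‖d s i‖ ≤ Dd := by
    intro s i hi
    have h1 := Finset.single_le_sum (f := fun i => ‖d s i‖) (fun _ _ => norm_nonneg _) hi
    have h2 := Finset.single_le_sum (f := fun s => ∑ i ∈ F, ‖d s i‖)
      (fun _ _ => Finset.sum_nonneg fun _ _ => norm_nonneg _) (Finset.mem_univ s)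
    rw [hDddef]; linarith
  -- the perturbation
  set w : ℕ → X := fun k => ∑ s : Fin N, ∑ i ∈ F,
    d s i • ((∏ v ∈ Finset.range (r s * n k), b s ((φ s)^[v] i))⁻¹ •
      e ((φ s)^[r s * n k] i)) with hwdef
  have hwA : ∀ k, ‖w k‖ ≤ Dd * A k := by
    intro k
    calc ‖w k‖ ≤ ∑ s : Fin N, ‖∑ i ∈ F,
          d s i • ((∏ v ∈ Finset.range (r s * n k), b s ((φ s)^[v] i))⁻¹ •
            e ((φ s)^[r s * n k] i))‖ := norm_sum_le _ _
      _ ≤ ∑ s : Fin N, ∑ i ∈ F, ‖d s i • ((∏ v ∈ Finset.range (r s * n k),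
            b s ((φ s)^[v] i))⁻¹ • e ((φ s)^[r s * n k] i))‖ :=
          Finset.sum_le_sum fun s _ => norm_sum_le _ _
      _ = ∑ s : Fin N, ∑ i ∈ F, ‖d s i‖ * ‖(∏ v ∈ Finset.range (r s * n k),
            b s ((φ s)^[v] i))⁻¹ • e ((φ s)^[r s * n k] i)‖ := by
          simp [norm_smul]
      _ ≤ ∑ s : Fin N, ∑ i ∈ F, Dd * ‖(∏ v ∈ Finset.range (r s * n k),
            b s ((φ s)^[v] i))⁻¹ • e ((φ s)^[r s * n k] i)‖ :=
          Finset.sum_le_sum fun s _ => Finset.sum_le_sum fun i hi =>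
            mul_le_mul_of_nonneg_right (hdb s i hi) (norm_nonneg _)
      _ = Dd * A k := by rw [hA]; simp [Finset.mul_sum]
  set zz : ℕ → X := fun k => (∑ i ∈ F, c i • e i) + ((lamr k : ℝ) : ℂ)⁻¹ • w k with hzzdef
  have hlamnorm : ∀ k, ‖((lamr k : ℝ) : ℂ)‖ = lamr k := by
    intro k
    rw [Complex.norm_real, Real.norm_eq_abs, abs_of_pos (hlampos k)]
  have hlamne : ∀ k, ((lamr k : ℝ) : ℂ) ≠ 0 := by
    intro k
    simp only [ne_eq, Complex.ofReal_eq_zero]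
    exact ne_of_gt (hlampos k)
  have hz : ∀ k, ‖zz k - ∑ i ∈ F, c i • e i‖ ≤ Dd * ((lamr k)⁻¹ * A k) := by
    intro k
    rw [hzzdef]
    simp only [add_sub_cancel_left]
    rw [norm_smul, norm_inv, hlamnorm]
    calc (lamr k)⁻¹ * ‖w k‖ ≤ (lamr k)⁻¹ * (Dd * A k) :=
        mul_le_mul_of_nonneg_left (hwA k) (inv_nonneg.mpr (hlampos k).le)
      _ = Dd * ((lamr k)⁻¹ * A k) := by ring
  -- expansion of the orbit elements
  have hexp : ∀ (l : Fin N) (k : ℕ),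
      ((lamr k : ℝ) : ℂ) • ((T l ^ (r l * n k)) (zz k)) - ∑ i ∈ F, d l i • e i
      = ((lamr k : ℝ) : ℂ) • ((T l ^ (r l * n k)) (∑ i ∈ F, c i • e i))
        + ∑ s ∈ Finset.univ.erase l, ∑ i ∈ F, d s i •
            ((∏ v ∈ Finset.range (r s * n k), b s ((φ s)^[v] i))⁻¹ •
              backVec (φ l) (b l) e (r l * n k) ((φ s)^[r s * n k] i)) := by
    intro l k
    have hTw : (T l ^ (r l * n k)) (w k)
        = (∑ i ∈ F, d l i • e i) + ∑ s ∈ Finset.univ.erase l, ∑ i ∈ F, d s i •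
            ((∏ v ∈ Finset.range (r s * n k), b s ((φ s)^[v] i))⁻¹ •
              backVec (φ l) (b l) e (r l * n k) ((φ s)^[r s * n k] i)) := by
      rw [hwdef]
      rw [map_sum, ← Finset.add_sum_erase _ _ (Finset.mem_univ l)]
      congr 1
      · rw [map_sum]
        apply Finset.sum_congr rfl; intro i _
        rw [map_smul, pow_apply_S J hJ e he (hb l) (hφ l) (T l) (hT l)]
      · apply Finset.sum_congr rfl; intro s _
        rw [map_sum]
        apply Finset.sum_congr rfl; intro i _
        rw [map_smul, map_smul, pow_apply_e J hJ e he (b l) (hφ l) (T l) (hT l)]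
    have h1 : (T l ^ (r l * n k)) (zz k) = (T l ^ (r l * n k)) (∑ i ∈ F, c i • e i)
        + ((lamr k : ℝ) : ℂ)⁻¹ • ((T l ^ (r l * n k)) (w k)) := by
      rw [hzzdef]; rw [map_add, map_smul]
    rw [h1, smul_add, smul_inv_smul₀ (hlamne k), hTw]
    abel
  -- bound on the orbit of the base point
  have hTx : ∀ (l : Fin N) (k : ℕ),
      ‖(T l ^ (r l * n k)) (∑ i ∈ F, c i • e i)‖ ≤ Dc * Bf k := by
    intro l k
    have h1 : (T l ^ (r l * n k)) (∑ i ∈ F, c i • e i)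
        = ∑ i ∈ F, c i • backVec (φ l) (b l) e (r l * n k) i := by
      rw [map_sum]
      apply Finset.sum_congr rfl; intro i _
      rw [map_smul, pow_apply_e J hJ e he (b l) (hφ l) (T l) (hT l)]
    rw [h1]
    calc ‖∑ i ∈ F, c i • backVec (φ l) (b l) e (r l * n k) i‖
        ≤ ∑ i ∈ F, ‖c i • backVec (φ l) (b l) e (r l * n k) i‖ := norm_sum_le _ _
      _ = ∑ i ∈ F, ‖c i‖ * ‖backVec (φ l) (b l) e (r l * n k) i‖ := by simp [norm_smul]
      _ ≤ ∑ i ∈ F, Dc * ‖backVec (φ l) (b l) e (r l * n k) i‖ :=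
          Finset.sum_le_sum fun i hi =>
            mul_le_mul_of_nonneg_right (hcb i hi) (norm_nonneg _)
      _ = Dc * ∑ i ∈ F, ‖backVec (φ l) (b l) e (r l * n k) i‖ := (Finset.mul_sum _ _ _).symm
      _ ≤ Dc * Bf k := by
          apply mul_le_mul_of_nonneg_left _ hDc0.le
          rw [hBf]
          exact Finset.single_le_sum
            (f := fun s => ∑ j ∈ F, ‖backVec (φ s) (b s) e (r s * n k) j‖)
            (fun s _ => Finset.sum_nonneg fun j _ => norm_nonneg _) (Finset.mem_univ l)
  -- cross terms tend to zero
  have hcs : ∀ l : Fin N, Tendsto (fun k => ∑ s ∈ Finset.univ.erase l, ∑ i ∈ F,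
      ‖d s i‖ * ‖(∏ v ∈ Finset.range (r s * n k), b s ((φ s)^[v] i))⁻¹ •
        backVec (φ l) (b l) e (r l * n k) ((φ s)^[r s * n k] i)‖) atTop (𝓝 0) := by
    intro l
    have : Tendsto (fun k => ∑ s ∈ Finset.univ.erase l, ∑ i ∈ F,
        ‖d s i‖ * ‖(∏ v ∈ Finset.range (r s * n k), b s ((φ s)^[v] i))⁻¹ •
          backVec (φ l) (b l) e (r l * n k) ((φ s)^[r s * n k] i)‖) atTop
        (𝓝 (∑ s ∈ Finset.univ.erase l, ∑ _i ∈ F, (0:ℝ))) := by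
      apply tendsto_finset_sum; intro s hs
      apply tendsto_finset_sum; intro i _
      have hsl : s ≠ l := (Finset.mem_erase.mp hs).1
      have := (hH2 i s l hsl).const_mul ‖d s i‖
      simpa using this
    simpa using this
  -- componentwise bound
  have hcomp : ∀ (l : Fin N) (k : ℕ),
      ‖((lamr k : ℝ) : ℂ) • ((T l ^ (r l * n k)) (zz k)) - ∑ i ∈ F, d l i • e i‖
      ≤ Dc * (lamr k * Bf k) + ∑ s ∈ Finset.univ.erase l, ∑ i ∈ F,
          ‖d s i‖ * ‖(∏ v ∈ Finset.range (r s * n k), b s ((φ s)^[v] i))⁻¹ •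
            backVec (φ l) (b l) e (r l * n k) ((φ s)^[r s * n k] i)‖ := by
    intro l k
    rw [hexp l k]
    refine le_trans (norm_add_le _ _) (add_le_add ?_ ?_)
    · rw [norm_smul, hlamnorm]
      calc lamr k * ‖(T l ^ (r l * n k)) (∑ i ∈ F, c i • e i)‖
          ≤ lamr k * (Dc * Bf k) :=
            mul_le_mul_of_nonneg_left (hTx l k) (hlampos k).le
        _ = Dc * (lamr k * Bf k) := by ring
    · calc ‖∑ s ∈ Finset.univ.erase l, ∑ i ∈ F, d s i •
            ((∏ v ∈ Finset.range (r s * n k), b s ((φ s)^[v] i))⁻¹ •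
              backVec (φ l) (b l) e (r l * n k) ((φ s)^[r s * n k] i))‖
          ≤ ∑ s ∈ Finset.univ.erase l, ‖∑ i ∈ F, d s i •
            ((∏ v ∈ Finset.range (r s * n k), b s ((φ s)^[v] i))⁻¹ •
              backVec (φ l) (b l) e (r l * n k) ((φ s)^[r s * n k] i))‖ := norm_sum_le _ _
        _ ≤ ∑ s ∈ Finset.univ.erase l, ∑ i ∈ F, ‖d s i •
            ((∏ v ∈ Finset.range (r s * n k), b s ((φ s)^[v] i))⁻¹ •
              backVec (φ l) (b l) e (r l * n k) ((φ s)^[r s * n k] i))‖ :=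
            Finset.sum_le_sum fun s _ => norm_sum_le _ _
        _ = ∑ s ∈ Finset.univ.erase l, ∑ i ∈ F, ‖d s i‖ *
            ‖(∏ v ∈ Finset.range (r s * n k), b s ((φ s)^[v] i))⁻¹ •
              backVec (φ l) (b l) e (r l * n k) ((φ s)^[r s * n k] i)‖ := by
            simp [norm_smul]
  -- choose k
  have hev1 : ∀ᶠ k in atTop, Dd * ((lamr k)⁻¹ * A k) < ε := by
    have h := hlam1.const_mul Dd
    rw [mul_zero] at h
    exact h.eventually_lt_const hε
  have hev2 : ∀ᶠ k in atTop, ∀ l : Fin N, Dc * (lamr k * Bf k) +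
      (∑ s ∈ Finset.univ.erase l, ∑ i ∈ F,
        ‖d s i‖ * ‖(∏ v ∈ Finset.range (r s * n k), b s ((φ s)^[v] i))⁻¹ •
          backVec (φ l) (b l) e (r l * n k) ((φ s)^[r s * n k] i)‖) < ε := by
    apply eventually_all.mpr
    intro l
    have h1 := hlam2.const_mul Dc
    rw [mul_zero] at h1
    have h2 := h1.add (hcs l)
    rw [add_zero] at h2
    exact h2.eventually_lt_const hε
  obtain ⟨k, hk1, hk2⟩ := (hev1.and hev2).exists
  exact ⟨zz k, ((lamr k : ℝ) : ℂ), n k, lt_of_le_of_lt (hz k) hk1,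
    fun l => lt_of_le_of_lt (hcomp l k) (hk2 l)⟩

set_option maxHeartbeats 1000000 in
lemma backward_dense
    [TopologicalSpace.SeparableSpace X]
    (J : X →L[ℂ] (I → ℂ)) (hJ : Function.Injective J)
    (e : I → X) (he : ∀ i j : I, J (e i) j = if j = i then 1 else 0)
    (hdense : Dense (Submodule.span ℂ (Set.range e) : Set X))
    (hN : 2 ≤ N)
    (r : Fin N → ℕ)
    (b : Fin N → I → ℂ) (hb : ∀ l i, b l i ≠ 0)
    (φ : Fin N → I → I) (hφ : ∀ l, Function.Injective (φ l))
    (T : Fin N → X →L[ℂ] X)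
    (hT : ∀ (l : Fin N) (x : X) (i : I), J (T l x) i = b l i * J x (φ l i))
    (n : ℕ → ℕ)
    (hH1 : ∀ i j : I, ∀ l s : Fin N,
      Tendsto (fun k => ‖(∏ v ∈ Finset.range (r l * n k), b l ((φ l)^[v] i))⁻¹ •
            e ((φ l)^[r l * n k] i)‖ *
          ‖backVec (φ s) (b s) e (r s * n k) j‖) atTop (𝓝 0))
    (hH2 : ∀ i : I, ∀ s l : Fin N, s ≠ l →
      Tendsto (fun k => ‖(∏ v ∈ Finset.range (r s * n k), b s ((φ s)^[v] i))⁻¹ •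
          backVec (φ l) (b l) e (r l * n k) ((φ s)^[r s * n k] i)‖) atTop (𝓝 0)) :
    Dense {x : X | Dense (Set.range fun p : ℂ × ℕ =>
        fun l : Fin N => p.1 • (((T l) ^ (r l * p.2)) x))} := by
  classical
  -- the approximation statement
  have happrox : ∀ (w : X) (u : Fin N → X) (ρ : ℝ), 0 < ρ → ∀ (η : ℝ), 0 < η →
      ∃ (z : X) (lam : ℂ) (m : ℕ), ‖z - w‖ < ρ ∧
        ∀ l : Fin N, ‖lam • ((T l ^ (r l * m)) z) - u l‖ < η := by
    intro w u ρ hρ η hη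
    obtain ⟨w', hw'b, hw'mem⟩ := Metric.dense_iff.mp hdense w (ρ/2) (by positivity)
    obtain ⟨c', hc'⟩ := Finsupp.mem_span_range_iff_exists_finsupp.mp hw'mem
    have hul : ∀ l : Fin N, ∃ u' : X, dist u' (u l) < η/2 ∧
        ∃ d' : I →₀ ℂ, (d'.sum fun i a => a • e i) = u' := by
      intro l
      obtain ⟨u', hu'b, hu'mem⟩ := Metric.dense_iff.mp hdense (u l) (η/2) (by positivity)
      exact ⟨u', Metric.mem_ball.mp hu'b,
        Finsupp.mem_span_range_iff_exists_finsupp.mp hu'mem⟩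
    choose u' hu'b d' hd' using hul
    set F : Finset I := c'.support ∪ Finset.univ.biUnion (fun l => (d' l).support) with hFdef
    have hcsum : ∑ i ∈ F, c' i • e i = w' := by
      rw [← hc']
      exact (Finsupp.sum_of_support_subset c' Finset.subset_union_left
        (fun i a => a • e i) (fun i _ => zero_smul ℂ (e i))).symm
    have hdsum : ∀ l : Fin N, ∑ i ∈ F, d' l i • e i = u' l := by
      intro l
      rw [← hd' l]
      refine (Finsupp.sum_of_support_subset (d' l) ?_
        (fun i a => a • e i) (fun i _ => zero_smul ℂ (e i))).symm
      exact Finset.Subset.trans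
        (Finset.subset_biUnion_of_mem (fun l => (d' l).support) (Finset.mem_univ l))
        Finset.subset_union_right
    obtain ⟨z, lam, m, hz1, hz2⟩ := core_backward J hJ e he hN r b hb φ hφ T hT n hH1 hH2
      F (fun i => c' i) (fun l i => d' l i) (lt_min (by positivity : (0:ℝ) < ρ/2)
        (by positivity : (0:ℝ) < η/2))
    refine ⟨z, lam, m, ?_, ?_⟩
    · have h1 : ‖z - w'‖ < ρ/2 := by
        have := hz1; rw [hcsum] at this
        exact lt_of_lt_of_le this (min_le_left _ _)
      have h2 : ‖w' - w‖ < ρ/2 := by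
        rw [← dist_eq_norm]
        exact Metric.mem_ball.mp hw'b
      calc ‖z - w‖ ≤ ‖z - w'‖ + ‖w' - w‖ := norm_sub_le_norm_sub_add_norm_sub _ _ _
        _ < ρ/2 + ρ/2 := add_lt_add h1 h2
        _ = ρ := by ring
    · intro l
      have h1 : ‖lam • ((T l ^ (r l * m)) z) - u' l‖ < η/2 := by
        have := hz2 l; rw [hdsum l] at this
        exact lt_of_lt_of_le this (min_le_right _ _)
      have h2 : ‖u' l - u l‖ < η/2 := by
        rw [← dist_eq_norm]; exact hu'b l
      calc ‖lam • ((T l ^ (r l * m)) z) - u l‖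
          ≤ ‖lam • ((T l ^ (r l * m)) z) - u' l‖ + ‖u' l - u l‖ :=
            norm_sub_le_norm_sub_add_norm_sub _ _ _
        _ < η/2 + η/2 := add_lt_add h1 h2
        _ = η := by ring
  -- Baire category argument
  have hsep : TopologicalSpace.SeparableSpace (Fin N → X) := inferInstance
  have hne : Nonempty (Fin N → X) := ⟨0⟩
  set u : ℕ → (Fin N → X) := TopologicalSpace.denseSeq (Fin N → X) with hudef
  have hu : DenseRange u := TopologicalSpace.denseRange_denseSeq _
  set G : ℕ × ℕ → Set X := fun qm => ⋃ p : ℂ × ℕ,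
    {x : X | dist (fun l : Fin N => p.1 • ((T l ^ (r l * p.2)) x)) (u qm.1)
      < 1/((qm.2:ℝ)+1)} with hGdef
  have hGopen : ∀ qm, IsOpen (G qm) := by
    intro qm
    apply isOpen_iUnion
    intro p
    have hcont : Continuous fun x : X => (fun l : Fin N => p.1 • ((T l ^ (r l * p.2)) x)) :=
      continuous_pi fun l => ((T l ^ (r l * p.2)).continuous.const_smul p.1)
    exact Metric.isOpen_ball.preimage hcont
  have hGdense : ∀ qm, Dense (G qm) := by
    intro qm
    rw [Metric.dense_iff]
    intro w ρ hρ
    have hq : (0:ℝ) < 1/((qm.2:ℝ)+1) := by positivity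
    obtain ⟨z, lam, m, hz1, hz2⟩ := happrox w (u qm.1) ρ hρ (1/((qm.2:ℝ)+1)) hq
    refine ⟨z, Metric.mem_ball.mpr (by rw [dist_eq_norm]; exact hz1), ?_⟩
    rw [hGdef]
    apply Set.mem_iUnion.mpr
    refine ⟨(lam, m), ?_⟩
    simp only [Set.mem_setOf_eq]
    rw [dist_pi_lt_iff hq]
    intro l
    rw [dist_eq_norm]
    exact hz2 l
  have hGint : Dense (⋂ qm, G qm) := dense_iInter_of_isOpen hGopen hGdense
  apply hGint.mono
  intro x hx
  simp only [Set.mem_iInter] at hx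
  simp only [Set.mem_setOf_eq]
  have hucl : ∀ q : ℕ, u q ∈ closure (Set.range fun p : ℂ × ℕ =>
      fun l : Fin N => p.1 • (((T l) ^ (r l * p.2)) x)) := by
    intro q
    rw [Metric.mem_closure_iff]
    intro ε hε
    obtain ⟨m, hm⟩ := exists_nat_one_div_lt hε
    have hxq := hx (q, m)
    rw [hGdef] at hxq
    obtain ⟨p, hp⟩ := Set.mem_iUnion.mp hxq
    simp only [Set.mem_setOf_eq] at hp
    refine ⟨(fun l : Fin N => p.1 • (((T l) ^ (r l * p.2)) x)), ⟨p, rfl⟩, ?_⟩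
    rw [dist_comm]
    exact lt_trans hp hm
  have h2 : closure (Set.range u) ⊆ closure (Set.range fun p : ℂ × ℕ =>
      fun l : Fin N => p.1 • (((T l) ^ (r l * p.2)) x)) := by
    apply closure_minimal _ isClosed_closure
    rintro _ ⟨q, rfl⟩
    exact hucl q
  intro y
  exact h2 (hu y)
end main

set_option maxHeartbeats 1000000 in
theorem stmt3
    {X : Type*} [NormedAddCommGroup X] [NormedSpace ℂ X] [CompleteSpace X]
    [TopologicalSpace.SeparableSpace X] (hinfdim : ¬ FiniteDimensional ℂ X)
    {I : Type*} [Countable I] [Infinite I]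
    (J : X →L[ℂ] (I → ℂ)) (hJ : Function.Injective J)
    (e : I → X) (he : ∀ i j : I, J (e i) j = if j = i then 1 else 0)
    (f : I → X →L[ℂ] ℂ) (hf : ∀ (i : I) (x : X), f i x = J x i)
    (hdense : Dense (Submodule.span ℂ (Set.range e) : Set X))
    (hOP : ∃ C : ℝ, ∀ i : I, ‖e i‖ * ‖f i‖ ≤ C)
    {N : ℕ} (hN : 2 ≤ N)
    (r : Fin N → ℕ) (hr1 : ∀ l, 1 ≤ r l) (hr : StrictMono r)
    (b : Fin N → I → ℂ) (hb : ∀ l i, b l i ≠ 0)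
    (φ : Fin N → I → I) (hφ : ∀ l, Function.Injective (φ l))
    (T : Fin N → X →L[ℂ] X)
    (hT : ∀ (l : Fin N) (x : X) (i : I), J (T l x) i = b l i * J x (φ l i))
    (hrun1 : ∀ l : Fin N, RunAway (φ l))
    (hrun2 : ∀ s l : Fin N, s < l → RunAwayWith ((φ s)^[r s]) ((φ l)^[r l])) :
    Dense {x : X | Dense (Set.range fun p : ℂ × ℕ =>
        fun l : Fin N => p.1 • (((T l) ^ (r l * p.2)) x))}
      ↔
    (∃ n : ℕ → ℕ, StrictMono n ∧ (∀ k, 1 ≤ n k) ∧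
      (∀ i j : I, ∀ l s : Fin N,
        Tendsto (fun k => ‖(∏ v ∈ Finset.range (r l * n k), b l ((φ l)^[v] i))⁻¹ •
              e ((φ l)^[r l * n k] i)‖ *
            ‖backVec (φ s) (b s) e (r s * n k) j‖) atTop (𝓝 0)) ∧
      (∀ i : I, ∀ s l : Fin N, s < l →
        Tendsto (fun k => ‖(∏ v ∈ Finset.range (r s * n k), b s ((φ s)^[v] i))⁻¹ •
            backVec (φ l) (b l) e (r l * n k) ((φ s)^[r s * n k] i)‖) atTop (𝓝 0) ∧
        Tendsto (fun k => ‖(∏ v ∈ Finset.range (r l * n k), b l ((φ l)^[v] i))⁻¹ •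
            backVec (φ s) (b s) e (r s * n k) ((φ l)^[r l * n k] i)‖) atTop (𝓝 0))) := by
  constructor
  · -- forward direction
    intro hLHS
    obtain ⟨C, hC⟩ := hOP
    have g : ℕ ≃ I := Nonempty.some inferInstance
    set Ik : ℕ → Finset I := fun k => (Finset.range k).image g with hIkdef
    have hIkmem : ∀ (i : I) (k : ℕ), g.symm i < k → i ∈ Ik k := fun i k hk =>
      Finset.mem_image.mpr ⟨g.symm i, Finset.mem_range.mpr hk, g.apply_symm_apply i⟩
    have hstep : ∀ (k M : ℕ), ∃ nn, M + 1 ≤ nn ∧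
        ((∀ i ∈ Ik k, ∀ j ∈ Ik k, ∀ l s : Fin N,
          ‖(∏ v ∈ Finset.range (r l * nn), b l ((φ l)^[v] i))⁻¹ • e ((φ l)^[r l * nn] i)‖ *
            ‖backVec (φ s) (b s) e (r s * nn) j‖ < 1/((k:ℝ)+1)) ∧
        (∀ i ∈ Ik k, ∀ s l : Fin N, s ≠ l →
          ‖(∏ v ∈ Finset.range (r s * nn), b s ((φ s)^[v] i))⁻¹ •
            backVec (φ l) (b l) e (r l * nn) ((φ s)^[r s * nn] i)‖ < 1/((k:ℝ)+1))) := by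
      intro k M
      obtain ⟨nn, h1, h2, h3⟩ := core_forward hinfdim J hJ e he f hf hC hN r hr1 b hb φ hφ
        T hT hrun1 hrun2 hLHS (Ik k) (show (0:ℝ) < 1/((k:ℝ)+1) by positivity) (M+1)
      exact ⟨nn, h1, h2, h3⟩
    choose nf hnf1 hnf2 using hstep
    set ns : ℕ → ℕ := fun k => Nat.rec (nf 0 0) (fun k ih => nf (k+1) ih) k with hnsdef
    have hns0 : ns 0 = nf 0 0 := rfl
    have hnss : ∀ k, ns (k+1) = nf (k+1) (ns k) := fun k => rfl
    have hsm : StrictMono ns := strictMono_nat_of_lt_succ (fun k => by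
      rw [hnss]; have := hnf1 (k+1) (ns k); omega)
    have hge1 : ∀ k, 1 ≤ ns k := by
      intro k
      cases k with
      | zero => have := hnf1 0 0; rw [hns0]; omega
      | succ k => rw [hnss]; have := hnf1 (k+1) (ns k); omega
    have hprop : ∀ k : ℕ,
        (∀ i ∈ Ik k, ∀ j ∈ Ik k, ∀ l s : Fin N,
          ‖(∏ v ∈ Finset.range (r l * ns k), b l ((φ l)^[v] i))⁻¹ •
            e ((φ l)^[r l * ns k] i)‖ *
            ‖backVec (φ s) (b s) e (r s * ns k) j‖ < 1/((k:ℝ)+1)) ∧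
        (∀ i ∈ Ik k, ∀ s l : Fin N, s ≠ l →
          ‖(∏ v ∈ Finset.range (r s * ns k), b s ((φ s)^[v] i))⁻¹ •
            backVec (φ l) (b l) e (r l * ns k) ((φ s)^[r s * ns k] i)‖ < 1/((k:ℝ)+1)) := by
      intro k
      cases k with
      | zero => exact hnf2 0 0
      | succ k => exact hnf2 (k+1) (ns k)
    refine ⟨ns, hsm, hge1, ?_, ?_⟩
    · intro i j l s
      apply squeeze_zero' (Filter.Eventually.of_forall fun k =>
        mul_nonneg (norm_nonneg _) (norm_nonneg _)) ?_
        tendsto_one_div_add_atTop_nhds_zero_nat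
      filter_upwards [eventually_ge_atTop (max (g.symm i) (g.symm j) + 1)] with k hk
      have h1 : g.symm i < k := lt_of_lt_of_le (Nat.lt_succ_of_le (le_max_left _ _)) hk
      have h2 : g.symm j < k := lt_of_lt_of_le (Nat.lt_succ_of_le (le_max_right _ _)) hk
      exact le_of_lt ((hprop k).1 i (hIkmem i k h1) j (hIkmem j k h2) l s)
    · intro i s l hsl
      constructor
      · apply squeeze_zero' (Filter.Eventually.of_forall fun k => norm_nonneg _) ?_
          tendsto_one_div_add_atTop_nhds_zero_nat
        filter_upwards [eventually_ge_atTop (g.symm i + 1)] with k hk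
        have h1 : g.symm i < k := by omega
        exact le_of_lt ((hprop k).2 i (hIkmem i k h1) s l (ne_of_lt hsl))
      · apply squeeze_zero' (Filter.Eventually.of_forall fun k => norm_nonneg _) ?_
          tendsto_one_div_add_atTop_nhds_zero_nat
        filter_upwards [eventually_ge_atTop (g.symm i + 1)] with k hk
        have h1 : g.symm i < k := by omega
        exact le_of_lt ((hprop k).2 i (hIkmem i k h1) l s (ne_of_gt hsl))
  · -- backward direction
    rintro ⟨n, _, _, hH1, hH2⟩
    exact backward_dense J hJ e he hdense hN r b hb φ hφ T hT n hH1
      (fun i s l hsl => by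
        rcases lt_or_gt_of_ne hsl with h | h
        · exact (hH2 i s l h).1
        · exact (hH2 i l s h).2)
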